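/- Let a ∈ (0,1) and x ∈ (0, 1/2), and set n = 1/x and b = a^x. Then g′(x) < 0 holds if and only if h_n(b) > 0, where h_n(b) = n(1−b)(1−b^{n−2}) + (n−2)(1 + b^{n−2} − 2b^{n−1})·ln b. -/

import Mathlib

/-!
Writing `t = a^x`, so that `a^(2x) = t²` and `t^(n-2) = a/t²`, `t^(n-1) = a/t` for `n = 1/x`,
the quotient rule gives `g'(x)` in closed form, and clearing denominators yields
`g'(x) · x (a - t²)² = -t³ h_n(t)`. Both `x (a - t²)²` and `t³` are positive, so the signs agree.
-/

/-- `g(x) = ((a^(2x) − a^x)/(a − a^(2x)))·(1/x − 2)`, so that `f(n) = g(1/n)`. -/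
noncomputable def pwG (a x : ℝ) : ℝ :=
  ((a ^ (2 * x) - a ^ x) / (a - a ^ (2 * x))) * (1/x - 2)

/-- `h_n(b) = n(1−b)(1−b^(n−2)) + (n−2)(1 + b^(n−2) − 2b^(n−1))·ln b`. -/
noncomputable def pwH (n b : ℝ) : ℝ :=
  n * (1 - b) * (1 - b ^ (n - 2)) +
    (n - 2) * (1 + b ^ (n - 2) - 2 * b ^ (n - 1)) * Real.log b

open Real

section

variable {a x : ℝ}

lemma pwG_eq_rpow (ha : 0 < a) :
    pwG a = fun y => ((a ^ y) ^ 2 - a ^ y) / (a - (a ^ y) ^ 2) * (1 / y - 2) := by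
  funext y
  rw [pwG, mul_comm 2 y, rpow_mul ha.le, rpow_two]

lemma hasDerivAt_pwG (ha : 0 < a) (hx : x ≠ 0) (hden : a - (a ^ x) ^ 2 ≠ 0) :
    HasDerivAt (pwG a)
      (log a * a ^ x * (2 * a * a ^ x - a - (a ^ x) ^ 2) / (a - (a ^ x) ^ 2) ^ 2 * (1 / x - 2)
        - ((a ^ x) ^ 2 - a ^ x) / (a - (a ^ x) ^ 2) / x ^ 2) x := by
  rw [pwG_eq_rpow ha]
  have hp := (hasStrictDerivAt_const_rpow ha x).hasDerivAt
  have hq := ((hp.fun_pow 2).fun_sub hp).fun_div ((hasDerivAt_const x a).fun_sub (hp.fun_pow 2)) hden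
  have hr := (hasDerivAt_inv hx).sub_const 2
  simp only [one_div]
  refine (hq.mul hr).congr_deriv ?_
  field_simp
  ring

lemma pwH_inv_rpow (ha : 0 < a) (hx : x ≠ 0) :
    pwH (1 / x) (a ^ x) = 1 / x * (1 - a ^ x) * (1 - a / (a ^ x) ^ 2)
      + (1 / x - 2) * (1 + a / (a ^ x) ^ 2 - 2 * (a / a ^ x)) * (x * log a) := by
  have hpow : ∀ k : ℝ, (a ^ x) ^ (1 / x - k) = a / a ^ (x * k) := fun k => by
    rw [← rpow_mul ha.le, mul_sub, mul_one_div_cancel hx, rpow_sub ha, rpow_one]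
  rw [pwH, hpow, hpow, mul_one, rpow_mul ha.le, rpow_two, log_rpow ha]

lemma rpow_pow_three_mul_pwH_eq (ha : 0 < a) (hx : x ≠ 0) (hden : a - (a ^ x) ^ 2 ≠ 0) :
    (a ^ x) ^ 3 * pwH (1 / x) (a ^ x) = -deriv (pwG a) x * (x * (a - (a ^ x) ^ 2) ^ 2) := by
  have ht : a ^ x ≠ 0 := (rpow_pos_of_pos ha x).ne'
  rw [(hasDerivAt_pwG ha hx hden).deriv, pwH_inv_rpow ha hx]
  field_simp
  ring

end

/-- For `a ∈ (0,1)`, `x ∈ (0,1/2)`, with `n = 1/x` and `b = a^x`: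
`g′(x) < 0` if and only if `h_n(b) > 0`. -/
theorem pairwise_g_deriv_neg_iff_h_pos (a x : ℝ) (ha0 : 0 < a) (ha1 : a < 1)
    (hx0 : 0 < x) (hx : x < 1/2) :
    deriv (pwG a) x < 0 ↔ 0 < pwH (1/x) (a ^ x) := by
  have hlt : a < (a ^ x) ^ 2 := by
    rw [← rpow_two, ← rpow_mul ha0.le]
    simpa using rpow_lt_rpow_of_exponent_gt ha0 ha1 (show x * 2 < 1 by linarith)
  have hden : a - (a ^ x) ^ 2 ≠ 0 := by linarith
  have hP : 0 < x * (a - (a ^ x) ^ 2) ^ 2 := by positivity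
  have ht : 0 < (a ^ x) ^ 3 := by positivity
  rw [← mul_pos_iff_of_pos_left ht, rpow_pow_three_mul_pwH_eq ha0 hx0.ne' hden,
    mul_pos_iff_of_pos_right hP, neg_pos]
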